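/- arXiv:1404.3282 — 2 statements merged into one kernel-verified Lean document; each statement's English description precedes it below -/
import Mathlib

section
/- Let K be an imaginary quadratic field with ring of integers O_K, let N be a positive integer, f = N·O_K, and π_f : O_K → O_K/f the canonical projection. Define the homomorphism Ψ̃_f : (O_K/f)^× → I_K(f)/P_{K,Z}(f) sending x + f to the class of the principal ideal xO_K. Then the kernel of Ψ̃_f equals π_f(O_K^×) · π_f(Z)^×, i.e., the subgroup generated by images of units of O_K and images of integers prime to N. -/
open NumberField
open scoped nonZeroDivisors

/-- The subgroup `P_{K,ℤ}(f)` of the group of invertible fractional ideals: generated by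
principal ideals `xO_K` with `x ≡ n (mod f)` for some rational integer `n` prime to `N`. -/
noncomputable def PKZ (K : Type*) [Field K] [NumberField K] (N : ℕ) :
    Subgroup (FractionalIdeal (𝓞 K)⁰ K)ˣ :=
  Subgroup.closure {J | ∃ x : 𝓞 K, ∃ hx : (algebraMap (𝓞 K) K x : K) ≠ 0, ∃ n : ℤ,
    IsCoprime n (N : ℤ) ∧
    Ideal.Quotient.mk (Ideal.span {(N : 𝓞 K)}) x = ((n : 𝓞 K) : 𝓞 K ⧸ Ideal.span {(N : 𝓞 K)}) ∧
    J = toPrincipalIdeal (𝓞 K) K (Units.mk0 _ hx)}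

/-!
Pulling back along `x ↦ xO_K`, the ideal `xO_K` lies in `P_{K,ℤ}(f)` iff `x` lies in the subgroup of
`Kˣ` generated by the elements `≡ n (mod N)` and by `O_Kˣ`, the kernel of `x ↦ xO_K`. All of these
are fractions `a / b` with `b` prime to `N` and `a ≡ s b (mod N)` for some `s` in
`S = π_f(O_Kˣ) π_f(ℤ)ˣ`; such fractions form a subgroup of `Kˣ`, and for `x ∈ O_K` the condition
just says `x ≡ s (mod N)`. Conversely, if `x ≡ u n` then `x = (u⁻¹ x) u` with `u⁻¹ x ≡ n`.
-/

section PrincipalIdeals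

variable {R K : Type*} [CommRing R] [IsDomain R] [Field K] [Algebra R K] [IsFractionRing R K]

theorem ker_toPrincipalIdeal :
    (toPrincipalIdeal R K).ker = (Units.map (algebraMap R K : R →* K)).range := by
  ext y
  rw [MonoidHom.mem_ker, MonoidHom.mem_range, toPrincipalIdeal_eq_iff, Units.val_one,
    ← FractionalIdeal.spanSingleton_one, FractionalIdeal.spanSingleton_eq_spanSingleton]
  constructor
  · rintro ⟨u, hu⟩
    refine ⟨u⁻¹, Units.ext ?_⟩
    rw [Units.coe_map, MonoidHom.coe_coe, (smul_eq_iff_eq_inv_smul u).1 hu, Units.smul_def,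
      Algebra.smul_def, mul_one]
  · rintro ⟨u, rfl⟩
    refine ⟨u⁻¹, ?_⟩
    rw [Units.coe_map, MonoidHom.coe_coe, Units.smul_def, Algebra.smul_def, ← map_mul,
      Units.inv_mul, map_one]

theorem toPrincipalIdeal_mem_map_iff (H : Subgroup Kˣ) (y : Kˣ) :
    toPrincipalIdeal R K y ∈ H.map (toPrincipalIdeal R K) ↔
      y ∈ H ⊔ (Units.map (algebraMap R K : R →* K)).range := by
  rw [← Subgroup.mem_comap, Subgroup.comap_map_eq, ker_toPrincipalIdeal]

end PrincipalIdeals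

section FractionCongruence

variable {R K : Type*} [CommRing R] [Field K] [Algebra R K] (I : Ideal R) (S : Subgroup (R ⧸ I)ˣ)

def fractionCongrSubgroup : Subgroup Kˣ where
  carrier := {z | ∃ a b : R, IsUnit (Ideal.Quotient.mk I b) ∧
    (z : K) * algebraMap R K b = algebraMap R K a ∧
    ∃ s ∈ S, (s : R ⧸ I) * Ideal.Quotient.mk I b = Ideal.Quotient.mk I a}
  one_mem' := ⟨1, 1, by simp, by simp, 1, S.one_mem, by simp⟩
  mul_mem' := by
    rintro z w ⟨a, b, hb, hzb, s, hs, hsb⟩ ⟨c, d, hd, hwd, t, ht, htd⟩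
    refine ⟨a * c, b * d, by rw [map_mul]; exact hb.mul hd, ?_, s * t, S.mul_mem hs ht, ?_⟩
    · rw [Units.val_mul, map_mul, map_mul, ← hzb, ← hwd]; ring
    · rw [Units.val_mul, map_mul, map_mul, ← hsb, ← htd]; ring
  inv_mem' := by
    rintro z ⟨a, b, hb, hzb, s, hs, hsb⟩
    refine ⟨b, a, hsb ▸ s.isUnit.mul hb, ?_, s⁻¹, S.inv_mem hs, ?_⟩
    · rw [← hzb, Units.val_inv_eq_inv_val, inv_mul_cancel_left₀ z.ne_zero]
    · rw [← hsb, Units.inv_mul_cancel_left]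

variable {I S} [IsFractionRing R K]

theorem mem_fractionCongrSubgroup_iff {z : Kˣ} {x : R} (hz : (z : K) = algebraMap R K x) :
    z ∈ fractionCongrSubgroup (K := K) I S ↔ ∃ s ∈ S, (s : R ⧸ I) = Ideal.Quotient.mk I x := by
  constructor
  · rintro ⟨a, b, hb, hzb, s, hs, hsb⟩
    have hxb : x * b = a := IsFractionRing.injective R K (by rw [map_mul, ← hz, hzb])
    refine ⟨s, hs, hb.mul_right_cancel ?_⟩
    rw [hsb, ← hxb, map_mul]
  · rintro ⟨s, hs, hsx⟩
    exact ⟨x, 1, by simp, by simp [hz], s, hs, by simp [hsx]⟩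

end FractionCongruence

section IntegerCongruence

variable {R : Type*} [CommRing R] (I : Ideal R) {m : ℤ}

theorem intCast_natCast_mem_span_singleton (N : ℕ) : ((N : ℤ) : R) ∈ Ideal.span {(N : R)} := by
  rw [Int.cast_natCast]
  exact Ideal.mem_span_singleton_self _

theorem isUnit_mk_intCast_of_isCoprime (hm : (m : R) ∈ I) {n : ℤ} (hn : IsCoprime n m) :
    IsUnit (Ideal.Quotient.mk I (n : R)) := by
  have hm0 : (m : R ⧸ I) = 0 := by
    rw [← map_intCast (Ideal.Quotient.mk I), Ideal.Quotient.eq_zero_iff_mem]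
    exact hm
  rw [map_intCast, ← isCoprime_zero_right, ← hm0]
  exact hn.intCast

/-- The subgroup `π(Rˣ) · π(ℤ)ˣ` of `(R ⧸ I)ˣ`, with `π(ℤ)ˣ` the images of integers prime to `m`. -/
def unitsMulIntSubgroup (hm : (m : R) ∈ I) : Subgroup (R ⧸ I)ˣ where
  carrier := {s | ∃ u : Rˣ, ∃ n : ℤ, IsCoprime n m ∧ (s : R ⧸ I) = Ideal.Quotient.mk I (u * n)}
  one_mem' := ⟨1, 1, isCoprime_one_left, by simp⟩
  mul_mem' := by
    rintro s t ⟨u, n, hn, hs⟩ ⟨v, k, hk, ht⟩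
    refine ⟨u * v, n * k, hn.mul_left hk, ?_⟩
    rw [Units.val_mul, hs, ht, ← map_mul]
    congr 1
    push_cast
    ring
  inv_mem' := by
    rintro s ⟨u, n, ⟨p, q, hpq⟩, hs⟩
    refine ⟨u⁻¹, p, ⟨n, q, by linear_combination hpq⟩, Units.inv_eq_of_mul_eq_one_right ?_⟩
    rw [hs, ← map_mul, ← map_one (Ideal.Quotient.mk I), Ideal.Quotient.eq, ← neg_mem_iff]
    convert I.mul_mem_left (q : R) hm using 1
    have hpq' : (p : R) * n + q * m = 1 := by exact_mod_cast congrArg (Int.cast (R := R)) hpq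
    linear_combination -hpq' - (n * p : R) * u.mul_inv

theorem exists_mem_unitsMulIntSubgroup (hm : (m : R) ∈ I) (u : Rˣ) {n : ℤ} (hn : IsCoprime n m) :
    ∃ s ∈ unitsMulIntSubgroup I hm, (s : R ⧸ I) = Ideal.Quotient.mk I (u * n) := by
  have hun : IsUnit (Ideal.Quotient.mk I (u * n : R)) := by
    rw [map_mul]
    exact (u.isUnit.map _).mul (isUnit_mk_intCast_of_isCoprime I hm hn)
  exact ⟨hun.unit, ⟨u, n, hn, rfl⟩, rfl⟩

end IntegerCongruence

section RayClass

variable (K : Type*) [Field K] (N : ℕ)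

local notation "π" => Ideal.Quotient.mk (Ideal.span {(N : 𝓞 K)})

def pkzGenerators : Set Kˣ :=
  {y | ∃ x : 𝓞 K, ∃ hx : (algebraMap (𝓞 K) K x : K) ≠ 0, ∃ n : ℤ, IsCoprime n (N : ℤ) ∧
    π x = π (n : 𝓞 K) ∧ y = Units.mk0 _ hx}

theorem PKZ_eq_map_closure [NumberField K] :
    PKZ K N = (Subgroup.closure (pkzGenerators K N)).map (toPrincipalIdeal (𝓞 K) K) := by
  rw [PKZ, MonoidHom.map_closure]
  congr 1
  ext J
  constructor
  · rintro ⟨x, hx, n, hn, hxn, rfl⟩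
    exact ⟨_, ⟨x, hx, n, hn, hxn, rfl⟩, rfl⟩
  · rintro ⟨_, ⟨x, hx, n, hn, hxn, rfl⟩, rfl⟩
    exact ⟨x, hx, n, hn, hxn, rfl⟩

theorem closure_pkzGenerators_sup_le [NumberField K] :
    Subgroup.closure (pkzGenerators K N) ⊔ (Units.map (algebraMap (𝓞 K) K : 𝓞 K →* K)).range ≤
      fractionCongrSubgroup (Ideal.span {(N : 𝓞 K)})
        (unitsMulIntSubgroup _ (intCast_natCast_mem_span_singleton N)) := by
  have hN := intCast_natCast_mem_span_singleton (R := 𝓞 K) N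
  refine sup_le ((Subgroup.closure_le _).2 ?_) ?_
  · rintro _ ⟨x, hx, n, hn, hxn, rfl⟩
    obtain ⟨s, hs, hsn⟩ := exists_mem_unitsMulIntSubgroup _ hN 1 hn
    refine (mem_fractionCongrSubgroup_iff rfl).2 ⟨s, hs, ?_⟩
    rw [hsn, hxn, Units.val_one, one_mul]
  · rintro _ ⟨u, rfl⟩
    obtain ⟨s, hs, hsu⟩ := exists_mem_unitsMulIntSubgroup _ hN u isCoprime_one_left
    refine (mem_fractionCongrSubgroup_iff rfl).2 ⟨s, hs, ?_⟩
    rw [hsu, Int.cast_one, mul_one]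

theorem mk0_mem_closure_pkzGenerators_sup {x : 𝓞 K} (hx0 : (algebraMap (𝓞 K) K x : K) ≠ 0)
    (u : (𝓞 K)ˣ) {n : ℤ} (hn : IsCoprime n (N : ℤ)) (hxun : π x = π (u * n)) :
    Units.mk0 _ hx0 ∈ Subgroup.closure (pkzGenerators K N) ⊔
      (Units.map (algebraMap (𝓞 K) K : 𝓞 K →* K)).range := by
  set y : 𝓞 K := ((u⁻¹ : (𝓞 K)ˣ) : 𝓞 K) * x with hy
  have hy0 : (algebraMap (𝓞 K) K y : K) ≠ 0 := by
    simpa [hy] using hx0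
  have hyn : π y = π (n : 𝓞 K) := by
    rw [hy, map_mul, hxun, ← map_mul, Units.inv_mul_cancel_left]
  refine Subgroup.mem_sup.2 ⟨Units.mk0 _ hy0, Subgroup.subset_closure ⟨y, hy0, n, hn, hyn, rfl⟩,
    _, ⟨u, rfl⟩, Units.ext ?_⟩
  simp only [Units.val_mul, Units.val_mk0, Units.coe_map, MonoidHom.coe_coe]
  rw [← map_mul, hy, mul_comm, Units.mul_inv_cancel_left]

end RayClass

theorem kernel_of_PsiTilde_general (K : Type*) [Field K] [NumberField K]
    (N : ℕ) (f : Ideal (𝓞 K)) (hf : f = Ideal.span {(N : 𝓞 K)})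
    (x : 𝓞 K) (hx0 : (algebraMap (𝓞 K) K x : K) ≠ 0) :
    toPrincipalIdeal (𝓞 K) K (Units.mk0 _ hx0) ∈ PKZ K N ↔
      ∃ u : (𝓞 K)ˣ, ∃ n : ℤ, IsCoprime n (N : ℤ) ∧
        Ideal.Quotient.mk f x = Ideal.Quotient.mk f ((u : 𝓞 K) * (n : 𝓞 K)) := by
  subst hf
  rw [PKZ_eq_map_closure, toPrincipalIdeal_mem_map_iff]
  constructor
  · intro hx
    obtain ⟨s, ⟨u, n, hn, hs⟩, hsx⟩ :=
      (mem_fractionCongrSubgroup_iff (x := x) rfl).1 (closure_pkzGenerators_sup_le K N hx)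
    exact ⟨u, n, hn, hsx.symm.trans hs⟩
  · rintro ⟨u, n, hn, hxun⟩
    exact mk0_mem_closure_pkzGenerators_sup K N hx0 u hn hxun

theorem kernel_of_PsiTilde (K : Type*) [Field K] [NumberField K]
    (h2 : Module.finrank ℚ K = 2)
    (him : ∀ v : InfinitePlace K, v.IsComplex)
    (N : ℕ) (hN : 0 < N) (f : Ideal (𝓞 K)) (hf : f = Ideal.span {(N : 𝓞 K)})
    (x : 𝓞 K) (hx0 : (algebraMap (𝓞 K) K x : K) ≠ 0)
    (hx : IsUnit (Ideal.Quotient.mk f x)) :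
    toPrincipalIdeal (𝓞 K) K (Units.mk0 _ hx0) ∈ PKZ K N ↔
      ∃ u : (𝓞 K)ˣ, ∃ n : ℤ, IsCoprime n (N : ℤ) ∧
        Ideal.Quotient.mk f x = Ideal.Quotient.mk f ((u : 𝓞 K) * (n : 𝓞 K)) :=
  kernel_of_PsiTilde_general K N f hf x hx0
end

section
/- The discriminant of the polynomial X^6 + 10X^5 + 46X^4 + 108X^3 + 122X^2 + 38X - 1 equals 2^{10}·3^6·13^5. -/
private lemma vec6_zero (a b c d e f : ℂ) : ![a,b,c,d,e,f] 0 = a := rfl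
private lemma vec6_one (a b c d e f : ℂ) : ![a,b,c,d,e,f] 1 = b := rfl
private lemma vec6_two (a b c d e f : ℂ) : ![a,b,c,d,e,f] 2 = c := rfl
private lemma vec6_three (a b c d e f : ℂ) : ![a,b,c,d,e,f] 3 = d := rfl
private lemma vec6_four (a b c d e f : ℂ) : ![a,b,c,d,e,f] 4 = e := rfl
private lemma vec6_five (a b c d e f : ℂ) : ![a,b,c,d,e,f] 5 = f := rfl
private lemma fv0 : ((0:Fin 6):ℕ) = 0 := rfl
private lemma fv1 : ((1:Fin 6):ℕ) = 1 := rfl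
private lemma fv2 : ((2:Fin 6):ℕ) = 2 := rfl
private lemma fv3 : ((3:Fin 6):ℕ) = 3 := rfl
private lemma fv4 : ((4:Fin 6):ℕ) = 4 := rfl
private lemma fv5 : ((5:Fin 6):ℕ) = 5 := rfl

private lemma vc1 (a : ℂ) (s : Fin 5 → ℂ) : Matrix.vecCons a s 1 = s 0 := rfl
private lemma vc2 (a : ℂ) (s : Fin 5 → ℂ) : Matrix.vecCons a s 2 = s 1 := rfl
private lemma vc3 (a : ℂ) (s : Fin 5 → ℂ) : Matrix.vecCons a s 3 = s 2 := rfl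
private lemma vc4 (a : ℂ) (s : Fin 5 → ℂ) : Matrix.vecCons a s 4 = s 3 := rfl
private lemma vc5 (a : ℂ) (s : Fin 5 → ℂ) : Matrix.vecCons a s 5 = s 4 := rfl

noncomputable def auxL : Matrix (Fin 6) (Fin 6) ℂ :=
  !![1, 0, 0, 0, 0, 0;
     (-5/3), 1, 0, 0, 0, 0;
     (4/3), -8, 1, 0, 0, 0;
     (28/3), 28, (-41/8), 1, 0, 0;
     -56, -45, (111/8), (-75/13), 1, 0;
     (475/3), -104, (-69/8), (177/13), (-68/7), 1]

noncomputable def auxU : Matrix (Fin 6) (Fin 6) ℂ :=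
  !![6, -10, 8, 56, -336, 950;
     0, (-26/3), (208/3), (-728/3), 390, (2704/3);
     0, 0, 208, -1066, 2886, -1794;
     0, 0, 0, (507/4), (-2925/4), (6903/4);
     0, 0, 0, 0, -504, 4896;
     0, 0, 0, 0, 0, (2808/7)]

noncomputable def auxM : Matrix (Fin 6) (Fin 6) ℂ :=
  !![6, -10, 8, 56, -336, 950;
     -10, 8, 56, -336, 950, -682;
     8, 56, -336, 950, -682, -7738;
     56, -336, 950, -682, -7738, 45024;
     -336, 950, -682, -7738, 45024, -123712;
     950, -682, -7738, 45024, -123712, 48488]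

set_option maxHeartbeats 1000000 in
private lemma auxM_eq : auxM = auxL * auxU := by
  ext i j
  fin_cases i <;> fin_cases j <;>
    norm_num [auxM, auxL, auxU, Matrix.mul_apply, Fin.sum_univ_succ]

private lemma auxL_tri : auxL.BlockTriangular OrderDual.toDual := by
  intro i j hij
  fin_cases i <;> fin_cases j <;> first | exact absurd hij (by decide) | norm_num [auxL]

private lemma auxU_tri : auxU.BlockTriangular id := by
  intro i j hij
  fin_cases i <;> fin_cases j <;> first | exact absurd hij (by decide) | norm_num [auxU]

set_option maxHeartbeats 1000000 in
private lemma auxM_det : auxM.det = 2 ^ 10 * 3 ^ 6 * 13 ^ 5 := by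
  rw [auxM_eq, Matrix.det_mul, Matrix.det_of_lowerTriangular auxL auxL_tri,
    Matrix.det_of_upperTriangular auxU_tri]
  rw [Fin.prod_univ_six, Fin.prod_univ_six]
  rw [show auxL 0 0 = 1 from rfl,
    show auxU 0 0 = 6 from rfl,
    show auxL 1 1 = 1 from rfl,
    show auxU 1 1 = (-26/3) from rfl,
    show auxL 2 2 = 1 from rfl,
    show auxU 2 2 = 208 from rfl,
    show auxL 3 3 = 1 from rfl,
    show auxU 3 3 = (507/4) from rfl,
    show auxL 4 4 = 1 from rfl,
    show auxU 4 4 = -504 from rfl,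
    show auxL 5 5 = 1 from rfl,
    show auxU 5 5 = (2808/7) from rfl]
  norm_num

set_option maxHeartbeats 2000000 in
open Polynomial in
theorem sextic_discriminant (r : Fin 6 → ℂ)
    (h : (X ^ 6 + 10 * X ^ 5 + 46 * X ^ 4 + 108 * X ^ 3 + 122 * X ^ 2 + 38 * X - 1 : ℂ[X])
        = ∏ i, (X - C (r i))) :
    ∏ i, ∏ j ∈ Finset.Ioi i, (r i - r j) ^ 2 = 2 ^ 10 * 3 ^ 6 * 13 ^ 5 := by
  have key : ∀ x : ℂ, ∏ i, (x - r i)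
      = x ^ 6 + 10 * x ^ 5 + 46 * x ^ 4 + 108 * x ^ 3 + 122 * x ^ 2 + 38 * x - 1 := by
    intro x
    have := congrArg (eval x) h.symm
    simpa [eval_prod] using this
  have hroot : ∀ i, (r i) ^ 6 + 10 * (r i) ^ 5 + 46 * (r i) ^ 4 + 108 * (r i) ^ 3
      + 122 * (r i) ^ 2 + 38 * (r i) - 1 = 0 := by
    intro i
    rw [← key (r i)]
    exact Finset.prod_eq_zero (Finset.mem_univ i) (sub_self _)
  have k0 := key 0
  have k1 := key 1
  have km1 := key (-1)
  have k2 := key 2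
  have km2 := key (-2)
  have k3 := key 3
  rw [Fin.prod_univ_six] at k0 k1 km1 k2 km2 k3
  have he1 : (r 0 + r 1 + r 2 + r 3 + r 4 + r 5) = (-10:ℂ) := by
    linear_combination (1/12) * k0 + (-1/12) * k1 + (-1/24) * km1 + (1/24) * k2 + (1/120) * km2 + (-1/120) * k3
  have he2 : (r 0*r 1 + r 0*r 2 + r 0*r 3 + r 0*r 4 + r 0*r 5 + r 1*r 2 + r 1*r 3 + r 1*r 4 + r 1*r 5 + r 2*r 3 + r 2*r 4 + r 2*r 5 + r 3*r 4 + r 3*r 5 + r 4*r 5) = (46:ℂ) := by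
    linear_combination (1/4) * k0 + (-1/6) * k1 + (-1/6) * km1 + (1/24) * k2 + (1/24) * km2
  have he3 : (r 0*r 1*r 2 + r 0*r 1*r 3 + r 0*r 1*r 4 + r 0*r 1*r 5 + r 0*r 2*r 3 + r 0*r 2*r 4 + r 0*r 2*r 5 + r 0*r 3*r 4 + r 0*r 3*r 5 + r 0*r 4*r 5 + r 1*r 2*r 3 + r 1*r 2*r 4 + r 1*r 2*r 5 + r 1*r 3*r 4 + r 1*r 3*r 5 + r 1*r 4*r 5 + r 2*r 3*r 4 + r 2*r 3*r 5 + r 2*r 4*r 5 + r 3*r 4*r 5) = (-108:ℂ) := by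
    linear_combination (-5/12) * k0 + (7/12) * k1 + (1/24) * km1 + (-7/24) * k2 + (1/24) * km2 + (1/24) * k3
  have he4 : (r 0*r 1*r 2*r 3 + r 0*r 1*r 2*r 4 + r 0*r 1*r 2*r 5 + r 0*r 1*r 3*r 4 + r 0*r 1*r 3*r 5 + r 0*r 1*r 4*r 5 + r 0*r 2*r 3*r 4 + r 0*r 2*r 3*r 5 + r 0*r 2*r 4*r 5 + r 0*r 3*r 4*r 5 + r 1*r 2*r 3*r 4 + r 1*r 2*r 3*r 5 + r 1*r 2*r 4*r 5 + r 1*r 3*r 4*r 5 + r 2*r 3*r 4*r 5) = (122:ℂ) := by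
    linear_combination (-5/4) * k0 + (2/3) * k1 + (2/3) * km1 + (-1/24) * k2 + (-1/24) * km2
  have he5 : (r 0*r 1*r 2*r 3*r 4 + r 0*r 1*r 2*r 3*r 5 + r 0*r 1*r 2*r 4*r 5 + r 0*r 1*r 3*r 4*r 5 + r 0*r 2*r 3*r 4*r 5 + r 1*r 2*r 3*r 4*r 5) = (-38:ℂ) := by
    linear_combination (1/3) * k0 + (-1) * k1 + (1/2) * km1 + (1/4) * k2 + (-1/20) * km2 + (-1/30) * k3
  have he6 : (r 0*r 1*r 2*r 3*r 4*r 5) = (-1:ℂ) := by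
    linear_combination 1 * k0
  have hp1 : r 0 + r 1 + r 2 + r 3 + r 4 + r 5 = (-10:ℂ) := he1
  have hp2 : r 0 ^ 2 + r 1 ^ 2 + r 2 ^ 2 + r 3 ^ 2 + r 4 ^ 2 + r 5 ^ 2 = (8:ℂ) := by
    linear_combination ((r 0 + r 1 + r 2 + r 3 + r 4 + r 5) - 10) * he1 - 2 * he2
  have hp3 : r 0 ^ 3 + r 1 ^ 3 + r 2 ^ 3 + r 3 ^ 3 + r 4 ^ 3 + r 5 ^ 3 = (56:ℂ) := by
    linear_combination ((r 0 + r 1 + r 2 + r 3 + r 4 + r 5)^2 - 10*(r 0 + r 1 + r 2 + r 3 + r 4 + r 5) + 100 - 3*(r 0*r 1 + r 0*r 2 + r 0*r 3 + r 0*r 4 + r 0*r 5 + r 1*r 2 + r 1*r 3 + r 1*r 4 + r 1*r 5 + r 2*r 3 + r 2*r 4 + r 2*r 5 + r 3*r 4 + r 3*r 5 + r 4*r 5)) * he1 + 30 * he2 + 3 * he3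
  have hp4 : r 0 ^ 4 + r 1 ^ 4 + r 2 ^ 4 + r 3 ^ 4 + r 4 ^ 4 + r 5 ^ 4 = (-336:ℂ) := by
    linear_combination ((r 0 + r 1 + r 2 + r 3 + r 4 + r 5)^3 - 10*(r 0 + r 1 + r 2 + r 3 + r 4 + r 5)^2 + 100*(r 0 + r 1 + r 2 + r 3 + r 4 + r 5) - 1000 - 4*(r 0*r 1 + r 0*r 2 + r 0*r 3 + r 0*r 4 + r 0*r 5 + r 1*r 2 + r 1*r 3 + r 1*r 4 + r 1*r 5 + r 2*r 3 + r 2*r 4 + r 2*r 5 + r 3*r 4 + r 3*r 5 + r 4*r 5)*((r 0 + r 1 + r 2 + r 3 + r 4 + r 5) - 10) + 4*(r 0*r 1*r 2 + r 0*r 1*r 3 + r 0*r 1*r 4 + r 0*r 1*r 5 + r 0*r 2*r 3 + r 0*r 2*r 4 + r 0*r 2*r 5 + r 0*r 3*r 4 + r 0*r 3*r 5 + r 0*r 4*r 5 + r 1*r 2*r 3 + r 1*r 2*r 4 + r 1*r 2*r 5 + r 1*r 3*r 4 + r 1*r 3*r 5 + r 1*r 4*r 5 + r 2*r 3*r 4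 + r 2*r 3*r 5 + r 2*r 4*r 5 + r 3*r 4*r 5)) * he1 + (2*(r 0*r 1 + r 0*r 2 + r 0*r 3 + r 0*r 4 + r 0*r 5 + r 1*r 2 + r 1*r 3 + r 1*r 4 + r 1*r 5 + r 2*r 3 + r 2*r 4 + r 2*r 5 + r 3*r 4 + r 3*r 5 + r 4*r 5) - 308) * he2 + (-40) * he3 + (-4) * he4
  have hp5 : r 0 ^ 5 + r 1 ^ 5 + r 2 ^ 5 + r 3 ^ 5 + r 4 ^ 5 + r 5 ^ 5 = (950:ℂ) := by
    linear_combination ((r 0 + r 1 + r 2 + r 3 + r 4 + r 5)^4 - 10*(r 0 + r 1 + r 2 + r 3 + r 4 + r 5)^3 + 100*(r 0 + r 1 + r 2 + r 3 + r 4 + r 5)^2 - 1000*(r 0 + r 1 + r 2 + r 3 + r 4 + r 5) + 10000 - 5*(r 0*r 1 + r 0*r 2 + r 0*r 3 + r 0*r 4 + r 0*r 5 + r 1*r 2 + r 1*r 3 + r 1*r 4 + r 1*r 5 + r 2*r 3 + r 2*r 4 + r 2*r 5 + r 3*r 4 + r 3*r 5 + r 4*r 5)*((r 0 + r 1 + r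 2 + r 3 + r 4 + r 5)^2 - 10*(r 0 + r 1 + r 2 + r 3 + r 4 + r 5) + 100) + 5*(r 0*r 1 + r 0*r 2 + r 0*r 3 + r 0*r 4 + r 0*r 5 + r 1*r 2 + r 1*r 3 + r 1*r 4 + r 1*r 5 + r 2*r 3 + r 2*r 4 + r 2*r 5 + r 3*r 4 + r 3*r 5 + r 4*r 5)^2 + 5*(r 0*r 1*r 2 + r 0*r 1*r 3 + r 0*r 1*r 4 + r 0*r 1*r 5 + r 0*r 2*r 3 + r 0*r 2*r 4 + r 0*r 2*r 5 + r 0*r 3*r 4 + r 0*r 3*r 5 + r 0*r 4*r 5 + r 1*r 2*r 3 + r 1*r 2*r 4 + r 1*r 2*r 5 + r 1*r 3*r 4 + r 1*r 3*r 5 + r 1*r 4*r 5 + r 2*r 3*r 4 + r 2*r 3*r 5 + r 2*r 4*r 5 + r 3*r 4*r 5)*((r 0 + r 1 + r 2 + r 3 + r 4 + r 5) - 10) - 5*(r 0*r 1*r 2*r 3 + r 0*r 1*r 2*r 4 + r 0*r 1*r 2*r 5 + r 0*r 1*r 3*r 4 + r 0*r 1*r 3*r 5 + r 0*r 1*r 4*r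 5 + r 0*r 2*r 3*r 4 + r 0*r 2*r 3*r 5 + r 0*r 2*r 4*r 5 + r 0*r 3*r 4*r 5 + r 1*r 2*r 3*r 4 + r 1*r 2*r 3*r 5 + r 1*r 2*r 4*r 5 + r 1*r 3*r 4*r 5 + r 2*r 3*r 4*r 5)) * he1 + (2700 - 50*(r 0*r 1 + r 0*r 2 + r 0*r 3 + r 0*r 4 + r 0*r 5 + r 1*r 2 + r 1*r 3 + r 1*r 4 + r 1*r 5 + r 2*r 3 + r 2*r 4 + r 2*r 5 + r 3*r 4 + r 3*r 5 + r 4*r 5) - 5*(r 0*r 1*r 2 + r 0*r 1*r 3 + r 0*r 1*r 4 + r 0*r 1*r 5 + r 0*r 2*r 3 + r 0*r 2*r 4 + r 0*r 2*r 5 + r 0*r 3*r 4 + r 0*r 3*r 5 + r 0*r 4*r 5 + r 1*r 2*r 3 + r 1*r 2*r 4 + r 1*r 2*r 5 + r 1*r 3*r 4 + r 1*r 3*r 5 + r 1*r 4*r 5 + r 2*r 3*r 4 + r 2*r 3*r 5 + r 2*r 4*r 5 + r 3*r 4*r 5)) * he2 + 270 * he3 + 50 * he4 + 5 * he5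
  have hp6 : r 0 ^ 6 + r 1 ^ 6 + r 2 ^ 6 + r 3 ^ 6 + r 4 ^ 6 + r 5 ^ 6 = (-682:ℂ) := by
    linear_combination hroot 0 + hroot 1 + hroot 2 + hroot 3 + hroot 4 + hroot 5 - 10 * hp5 - 46 * hp4 - 108 * hp3 - 122 * hp2 - 38 * hp1
  have hp7 : r 0 ^ 7 + r 1 ^ 7 + r 2 ^ 7 + r 3 ^ 7 + r 4 ^ 7 + r 5 ^ 7 = (-7738:ℂ) := by
    linear_combination r 0 ^ 1 * hroot 0 + r 1 ^ 1 * hroot 1 + r 2 ^ 1 * hroot 2 + r 3 ^ 1 * hroot 3 + r 4 ^ 1 * hroot 4 + r 5 ^ 1 * hroot 5 - 10 * hp6 - 46 * hp5 - 108 * hp4 - 122 * hp3 - 38 * hp2 + hp1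
  have hp8 : r 0 ^ 8 + r 1 ^ 8 + r 2 ^ 8 + r 3 ^ 8 + r 4 ^ 8 + r 5 ^ 8 = (45024:ℂ) := by
    linear_combination r 0 ^ 2 * hroot 0 + r 1 ^ 2 * hroot 1 + r 2 ^ 2 * hroot 2 + r 3 ^ 2 * hroot 3 + r 4 ^ 2 * hroot 4 + r 5 ^ 2 * hroot 5 - 10 * hp7 - 46 * hp6 - 108 * hp5 - 122 * hp4 - 38 * hp3 + hp2
  have hp9 : r 0 ^ 9 + r 1 ^ 9 + r 2 ^ 9 + r 3 ^ 9 + r 4 ^ 9 + r 5 ^ 9 = (-123712:ℂ) := by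
    linear_combination r 0 ^ 3 * hroot 0 + r 1 ^ 3 * hroot 1 + r 2 ^ 3 * hroot 2 + r 3 ^ 3 * hroot 3 + r 4 ^ 3 * hroot 4 + r 5 ^ 3 * hroot 5 - 10 * hp8 - 46 * hp7 - 108 * hp6 - 122 * hp5 - 38 * hp4 + hp3
  have hp10 : r 0 ^ 10 + r 1 ^ 10 + r 2 ^ 10 + r 3 ^ 10 + r 4 ^ 10 + r 5 ^ 10 = (48488:ℂ) := by
    linear_combination r 0 ^ 4 * hroot 0 + r 1 ^ 4 * hroot 1 + r 2 ^ 4 * hroot 2 + r 3 ^ 4 * hroot 3 + r 4 ^ 4 * hroot 4 + r 5 ^ 4 * hroot 5 - 10 * hp9 - 46 * hp8 - 108 * hp7 - 122 * hp6 - 38 * hp5 + hp4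
  have hM : (Matrix.vandermonde r).transpose * (Matrix.vandermonde r) = auxM := by
    ext i j
    fin_cases i <;> fin_cases j
    · simp [auxM, Matrix.mul_apply, Matrix.vandermonde, Fin.sum_univ_six, fv0, fv1, fv2, fv3, fv4, fv5,
        vec6_zero, vec6_one, vec6_two, vec6_three, vec6_four, vec6_five, vc1, vc2, vc3, vc4, vc5]
      try norm_num
    · simp [auxM, Matrix.mul_apply, Matrix.vandermonde, Fin.sum_univ_six, fv0, fv1, fv2, fv3, fv4, fv5,
        vec6_zero, vec6_one, vec6_two, vec6_three, vec6_four, vec6_five, vc1, vc2, vc3, vc4, vc5]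
      try linear_combination he1
    · simp [auxM, Matrix.mul_apply, Matrix.vandermonde, Fin.sum_univ_six, fv0, fv1, fv2, fv3, fv4, fv5,
        vec6_zero, vec6_one, vec6_two, vec6_three, vec6_four, vec6_five, vc1, vc2, vc3, vc4, vc5]
      try linear_combination hp2
    · simp [auxM, Matrix.mul_apply, Matrix.vandermonde, Fin.sum_univ_six, fv0, fv1, fv2, fv3, fv4, fv5,
        vec6_zero, vec6_one, vec6_two, vec6_three, vec6_four, vec6_five, vc1, vc2, vc3, vc4, vc5]
      try linear_combination hp3
    · simp [auxM, Matrix.mul_apply, Matrix.vandermonde, Fin.sum_univ_six, fv0, fv1, fv2, fv3, fv4, fv5,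
        vec6_zero, vec6_one, vec6_two, vec6_three, vec6_four, vec6_five, vc1, vc2, vc3, vc4, vc5]
      try linear_combination hp4
    · simp [auxM, Matrix.mul_apply, Matrix.vandermonde, Fin.sum_univ_six, fv0, fv1, fv2, fv3, fv4, fv5,
        vec6_zero, vec6_one, vec6_two, vec6_three, vec6_four, vec6_five, vc1, vc2, vc3, vc4, vc5]
      try linear_combination hp5
    · simp [auxM, Matrix.mul_apply, Matrix.vandermonde, Fin.sum_univ_six, fv0, fv1, fv2, fv3, fv4, fv5,
        vec6_zero, vec6_one, vec6_two, vec6_three, vec6_four, vec6_five, vc1, vc2, vc3, vc4, vc5]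
      try linear_combination he1
    · simp [auxM, Matrix.mul_apply, Matrix.vandermonde, Fin.sum_univ_six, fv0, fv1, fv2, fv3, fv4, fv5,
        vec6_zero, vec6_one, vec6_two, vec6_three, vec6_four, vec6_five, vc1, vc2, vc3, vc4, vc5]
      try linear_combination hp2
    · simp [auxM, Matrix.mul_apply, Matrix.vandermonde, Fin.sum_univ_six, fv0, fv1, fv2, fv3, fv4, fv5,
        vec6_zero, vec6_one, vec6_two, vec6_three, vec6_four, vec6_five, vc1, vc2, vc3, vc4, vc5]
      try linear_combination hp3
    · simp [auxM, Matrix.mul_apply, Matrix.vandermonde, Fin.sum_univ_six, fv0, fv1, fv2, fv3, fv4, fv5,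
        vec6_zero, vec6_one, vec6_two, vec6_three, vec6_four, vec6_five, vc1, vc2, vc3, vc4, vc5]
      try linear_combination hp4
    · simp [auxM, Matrix.mul_apply, Matrix.vandermonde, Fin.sum_univ_six, fv0, fv1, fv2, fv3, fv4, fv5,
        vec6_zero, vec6_one, vec6_two, vec6_three, vec6_four, vec6_five, vc1, vc2, vc3, vc4, vc5]
      try linear_combination hp5
    · simp [auxM, Matrix.mul_apply, Matrix.vandermonde, Fin.sum_univ_six, fv0, fv1, fv2, fv3, fv4, fv5,
        vec6_zero, vec6_one, vec6_two, vec6_three, vec6_four, vec6_five, vc1, vc2, vc3, vc4, vc5]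
      try linear_combination hp6
    · simp [auxM, Matrix.mul_apply, Matrix.vandermonde, Fin.sum_univ_six, fv0, fv1, fv2, fv3, fv4, fv5,
        vec6_zero, vec6_one, vec6_two, vec6_three, vec6_four, vec6_five, vc1, vc2, vc3, vc4, vc5]
      try linear_combination hp2
    · simp [auxM, Matrix.mul_apply, Matrix.vandermonde, Fin.sum_univ_six, fv0, fv1, fv2, fv3, fv4, fv5,
        vec6_zero, vec6_one, vec6_two, vec6_three, vec6_four, vec6_five, vc1, vc2, vc3, vc4, vc5]
      try linear_combination hp3
    · simp [auxM, Matrix.mul_apply, Matrix.vandermonde, Fin.sum_univ_six, fv0, fv1, fv2, fv3, fv4, fv5,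
        vec6_zero, vec6_one, vec6_two, vec6_three, vec6_four, vec6_five, vc1, vc2, vc3, vc4, vc5]
      try linear_combination hp4
    · simp [auxM, Matrix.mul_apply, Matrix.vandermonde, Fin.sum_univ_six, fv0, fv1, fv2, fv3, fv4, fv5,
        vec6_zero, vec6_one, vec6_two, vec6_three, vec6_four, vec6_five, vc1, vc2, vc3, vc4, vc5]
      try linear_combination hp5
    · simp [auxM, Matrix.mul_apply, Matrix.vandermonde, Fin.sum_univ_six, fv0, fv1, fv2, fv3, fv4, fv5,
        vec6_zero, vec6_one, vec6_two, vec6_three, vec6_four, vec6_five, vc1, vc2, vc3, vc4, vc5]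
      try linear_combination hp6
    · simp [auxM, Matrix.mul_apply, Matrix.vandermonde, Fin.sum_univ_six, fv0, fv1, fv2, fv3, fv4, fv5,
        vec6_zero, vec6_one, vec6_two, vec6_three, vec6_four, vec6_five, vc1, vc2, vc3, vc4, vc5]
      try linear_combination hp7
    · simp [auxM, Matrix.mul_apply, Matrix.vandermonde, Fin.sum_univ_six, fv0, fv1, fv2, fv3, fv4, fv5,
        vec6_zero, vec6_one, vec6_two, vec6_three, vec6_four, vec6_five, vc1, vc2, vc3, vc4, vc5]
      try linear_combination hp3
    · simp [auxM, Matrix.mul_apply, Matrix.vandermonde, Fin.sum_univ_six, fv0, fv1, fv2, fv3, fv4, fv5,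
        vec6_zero, vec6_one, vec6_two, vec6_three, vec6_four, vec6_five, vc1, vc2, vc3, vc4, vc5]
      try linear_combination hp4
    · simp [auxM, Matrix.mul_apply, Matrix.vandermonde, Fin.sum_univ_six, fv0, fv1, fv2, fv3, fv4, fv5,
        vec6_zero, vec6_one, vec6_two, vec6_three, vec6_four, vec6_five, vc1, vc2, vc3, vc4, vc5]
      try linear_combination hp5
    · simp [auxM, Matrix.mul_apply, Matrix.vandermonde, Fin.sum_univ_six, fv0, fv1, fv2, fv3, fv4, fv5,
        vec6_zero, vec6_one, vec6_two, vec6_three, vec6_four, vec6_five, vc1, vc2, vc3, vc4, vc5]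
      try linear_combination hp6
    · simp [auxM, Matrix.mul_apply, Matrix.vandermonde, Fin.sum_univ_six, fv0, fv1, fv2, fv3, fv4, fv5,
        vec6_zero, vec6_one, vec6_two, vec6_three, vec6_four, vec6_five, vc1, vc2, vc3, vc4, vc5]
      try linear_combination hp7
    · simp [auxM, Matrix.mul_apply, Matrix.vandermonde, Fin.sum_univ_six, fv0, fv1, fv2, fv3, fv4, fv5,
        vec6_zero, vec6_one, vec6_two, vec6_three, vec6_four, vec6_five, vc1, vc2, vc3, vc4, vc5]
      try linear_combination hp8
    · simp [auxM, Matrix.mul_apply, Matrix.vandermonde, Fin.sum_univ_six, fv0, fv1, fv2, fv3, fv4, fv5,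
        vec6_zero, vec6_one, vec6_two, vec6_three, vec6_four, vec6_five, vc1, vc2, vc3, vc4, vc5]
      try linear_combination hp4
    · simp [auxM, Matrix.mul_apply, Matrix.vandermonde, Fin.sum_univ_six, fv0, fv1, fv2, fv3, fv4, fv5,
        vec6_zero, vec6_one, vec6_two, vec6_three, vec6_four, vec6_five, vc1, vc2, vc3, vc4, vc5]
      try linear_combination hp5
    · simp [auxM, Matrix.mul_apply, Matrix.vandermonde, Fin.sum_univ_six, fv0, fv1, fv2, fv3, fv4, fv5,
        vec6_zero, vec6_one, vec6_two, vec6_three, vec6_four, vec6_five, vc1, vc2, vc3, vc4, vc5]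
      try linear_combination hp6
    · simp [auxM, Matrix.mul_apply, Matrix.vandermonde, Fin.sum_univ_six, fv0, fv1, fv2, fv3, fv4, fv5,
        vec6_zero, vec6_one, vec6_two, vec6_three, vec6_four, vec6_five, vc1, vc2, vc3, vc4, vc5]
      try linear_combination hp7
    · simp [auxM, Matrix.mul_apply, Matrix.vandermonde, Fin.sum_univ_six, fv0, fv1, fv2, fv3, fv4, fv5,
        vec6_zero, vec6_one, vec6_two, vec6_three, vec6_four, vec6_five, vc1, vc2, vc3, vc4, vc5]
      try linear_combination hp8
    · simp [auxM, Matrix.mul_apply, Matrix.vandermonde, Fin.sum_univ_six, fv0, fv1, fv2, fv3, fv4, fv5,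
        vec6_zero, vec6_one, vec6_two, vec6_three, vec6_four, vec6_five, vc1, vc2, vc3, vc4, vc5]
      try linear_combination hp9
    · simp [auxM, Matrix.mul_apply, Matrix.vandermonde, Fin.sum_univ_six, fv0, fv1, fv2, fv3, fv4, fv5,
        vec6_zero, vec6_one, vec6_two, vec6_three, vec6_four, vec6_five, vc1, vc2, vc3, vc4, vc5]
      try linear_combination hp5
    · simp [auxM, Matrix.mul_apply, Matrix.vandermonde, Fin.sum_univ_six, fv0, fv1, fv2, fv3, fv4, fv5,
        vec6_zero, vec6_one, vec6_two, vec6_three, vec6_four, vec6_five, vc1, vc2, vc3, vc4, vc5]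
      try linear_combination hp6
    · simp [auxM, Matrix.mul_apply, Matrix.vandermonde, Fin.sum_univ_six, fv0, fv1, fv2, fv3, fv4, fv5,
        vec6_zero, vec6_one, vec6_two, vec6_three, vec6_four, vec6_five, vc1, vc2, vc3, vc4, vc5]
      try linear_combination hp7
    · simp [auxM, Matrix.mul_apply, Matrix.vandermonde, Fin.sum_univ_six, fv0, fv1, fv2, fv3, fv4, fv5,
        vec6_zero, vec6_one, vec6_two, vec6_three, vec6_four, vec6_five, vc1, vc2, vc3, vc4, vc5]
      try linear_combination hp8
    · simp [auxM, Matrix.mul_apply, Matrix.vandermonde, Fin.sum_univ_six, fv0, fv1, fv2, fv3, fv4, fv5,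
        vec6_zero, vec6_one, vec6_two, vec6_three, vec6_four, vec6_five, vc1, vc2, vc3, vc4, vc5]
      try linear_combination hp9
    · simp [auxM, Matrix.mul_apply, Matrix.vandermonde, Fin.sum_univ_six, fv0, fv1, fv2, fv3, fv4, fv5,
        vec6_zero, vec6_one, vec6_two, vec6_three, vec6_four, vec6_five, vc1, vc2, vc3, vc4, vc5]
      try linear_combination hp10
  calc ∏ i, ∏ j ∈ Finset.Ioi i, (r i - r j) ^ 2
      = ∏ i, ∏ j ∈ Finset.Ioi i, (r j - r i) ^ 2 :=
        Finset.prod_congr rfl fun i _ => Finset.prod_congr rfl fun j _ => by ring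
    _ = (∏ i, ∏ j ∈ Finset.Ioi i, (r j - r i)) ^ 2 := by
        rw [← Finset.prod_pow]
        exact Finset.prod_congr rfl fun i _ => Finset.prod_pow _ _ _
    _ = (Matrix.vandermonde r).det ^ 2 := by rw [Matrix.det_vandermonde]
    _ = ((Matrix.vandermonde r).transpose * Matrix.vandermonde r).det := by
        rw [Matrix.det_mul, Matrix.det_transpose, sq]
    _ = auxM.det := by rw [hM]
    _ = 2 ^ 10 * 3 ^ 6 * 13 ^ 5 := auxM_det
end
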